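/- arXiv:2411.19406 — 2 statements merged into one kernel-verified Lean document; each statement's English description precedes it below -/
import Mathlib

section
/- Let n_1, n_2 ≥ 1, ℓ_1, ℓ_2 ≥ 0, m_1 ≤ ℓ_1 n_1 and m_2 ≤ ℓ_2 n_2. If A ∈ M_{n_1×n_1}(R_{≤ℓ_1}) is (ℓ_1,q^{m_1})-Hadamard and B ∈ M_{n_2×n_2}(R_{≤ℓ_2}) is (ℓ_2,q^{m_2})-Hadamard, then the Kronecker product A ⊗ B is an (ℓ_1+ℓ_2, q^{m_1 n_2 + m_2 n_1})-Hadamard matrix. -/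
open scoped NNReal

open Classical in
/-- The absolute value `|f| = q^{-ν(f)}` on `K = Fq((x⁻¹))`, realized as the Laurent series
field `Fq((t))` with `t = x⁻¹`, so that the valuation `ν` is the `t`-adic order. -/
noncomputable def kabs (Fq : Type) [Field Fq] [Fintype Fq] (f : LaurentSeries Fq) : ℝ≥0 :=
  if f = 0 then 0 else (Fintype.card Fq : ℝ≥0) ^ (-(HahnSeries.order f))

/-- The embedding of the polynomial ring `R = Fq[x]` into `K = Fq((x⁻¹))`, sending `x` to
`t⁻¹`, i.e. to the Laurent series `single (-1) 1`. -/
noncomputable def polyToK (Fq : Type) [Field Fq] [Fintype Fq] (p : Polynomial Fq) :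
    LaurentSeries Fq :=
  Polynomial.eval₂ HahnSeries.C (HahnSeries.single (-1 : ℤ) (1 : Fq)) p

/-- The infinity norm on `K^ι`, `K = Fq((x⁻¹))`. -/
noncomputable def vnorm (Fq : Type) [Field Fq] [Fintype Fq] {ι : Type} [Fintype ι]
    (v : ι → LaurentSeries Fq) : ℝ≥0 :=
  Finset.univ.sup fun i => kabs Fq (v i)

/-- A (finite) family of vectors of `K^ι₁` is orthogonal if its members are nonzero and the
norm of any linear combination of them is the maximum of the norms of the summands. -/
def IsOrthTuple (Fq : Type) [Field Fq] [Fintype Fq] {ι₁ ι₂ : Type} [Fintype ι₁] [Fintype ι₂]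
    (u : ι₂ → ι₁ → LaurentSeries Fq) : Prop :=
  (∀ j, u j ≠ 0) ∧
    ∀ c : ι₂ → LaurentSeries Fq,
      vnorm Fq (∑ j, c j • u j) = Finset.univ.sup fun j => vnorm Fq (c j • u j)

/-- A square matrix over `R = Fq[x]` is `(l, q^m)`-Hadamard if its entries have degree at
most `l`, its columns form an orthogonal set in `K^ι`, and `|det| = q^m`. -/
def IsHadamard (Fq : Type) [Field Fq] [Fintype Fq] {ι : Type} [Fintype ι] [DecidableEq ι]
    (l m : ℕ) (A : Matrix ι ι (Polynomial Fq)) : Prop :=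
  (∀ i j, (A i j).degree ≤ (l : ℕ)) ∧
    IsOrthTuple Fq (fun j i => polyToK Fq (A i j)) ∧
    kabs Fq (polyToK Fq A.det) = (Fintype.card Fq : ℝ≥0) ^ m

/-! The absolute value is multiplicative and the norm is a sup of absolute values, so the norm of
a Kronecker product of vectors is the product of their norms. For orthogonality, a linear
combination of the columns `u j₁ ⊗ v j₂` is, in each block `i₂` of coordinates, a combination of
the `u j₁` with coefficients `(∑ j₂, c (j₁, j₂) • v j₂) i₂`; orthogonality of `u` in each block,
an exchange of suprema and then orthogonality of `v` split the norm into the required maximum.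
The determinant is handled by `det (A ⊗ B) = det A ^ n₂ * det B ^ n₁`. -/

open Finset

section Norms

variable (Fq : Type) [Field Fq] [Fintype Fq]

lemma kabs_mul (f g : LaurentSeries Fq) : kabs Fq (f * g) = kabs Fq f * kabs Fq g := by
  by_cases hf : f = 0
  · simp [kabs, hf]
  by_cases hg : g = 0
  · simp [kabs, hg]
  have hq : (Fintype.card Fq : ℝ≥0) ≠ 0 := by simp
  simp only [kabs, if_neg hf, if_neg hg, if_neg (mul_ne_zero hf hg), HahnSeries.order_mul hf hg,
    neg_add, zpow_add₀ hq]

lemma kabs_pow (f : LaurentSeries Fq) (n : ℕ) : kabs Fq (f ^ n) = kabs Fq f ^ n := by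
  induction n with
  | zero => simp [kabs]
  | succ n ih => rw [pow_succ, kabs_mul, ih, pow_succ]

lemma polyToK_mul (p q : Polynomial Fq) : polyToK Fq (p * q) = polyToK Fq p * polyToK Fq q :=
  Polynomial.eval₂_mul _ _

lemma polyToK_pow (p : Polynomial Fq) (n : ℕ) : polyToK Fq (p ^ n) = polyToK Fq p ^ n :=
  Polynomial.eval₂_pow _ _ n

variable {Fq} {ι ι₁ ι₂ κ : Type} [Fintype ι] [Fintype ι₁] [Fintype ι₂] [Fintype κ]

lemma vnorm_smul (c : LaurentSeries Fq) (v : ι → LaurentSeries Fq) :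
    vnorm Fq (c • v) = kabs Fq c * vnorm Fq v := by
  simp only [vnorm, Pi.smul_apply, smul_eq_mul, kabs_mul, NNReal.mul_finset_sup]

lemma vnorm_prod_eq_sup (f : ι₁ × ι₂ → LaurentSeries Fq) :
    vnorm Fq f = univ.sup fun i₂ => vnorm Fq fun i₁ => f (i₁, i₂) := by
  rw [vnorm, ← univ_product_univ, sup_product_right]
  rfl

lemma vnorm_kronecker (u : ι₁ → LaurentSeries Fq) (v : ι₂ → LaurentSeries Fq) :
    vnorm Fq (fun i : ι₁ × ι₂ => u i.1 * v i.2) = vnorm Fq u * vnorm Fq v := by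
  have hslice (i₂ : ι₂) : (fun i₁ => u i₁ * v i₂) = v i₂ • u := by
    funext i₁
    exact mul_comm _ _
  simp only [vnorm_prod_eq_sup, hslice, vnorm_smul]
  rw [← NNReal.finset_sup_mul, mul_comm]
  rfl

lemma IsOrthTuple.vnorm_sum {u : κ → ι → LaurentSeries Fq} (hu : IsOrthTuple Fq u)
    (c : κ → LaurentSeries Fq) :
    vnorm Fq (∑ j, c j • u j) = univ.sup fun j => kabs Fq (c j) * vnorm Fq (u j) := by
  simp only [hu.2 c, vnorm_smul]

end Norms

lemma sum_smul_kronecker_slice {Fq : Type} [Field Fq] {ι₁ ι₂ κ₁ κ₂ : Type}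
    [Fintype κ₁] [Fintype κ₂] (u : κ₁ → ι₁ → LaurentSeries Fq) (v : κ₂ → ι₂ → LaurentSeries Fq)
    (c : κ₁ × κ₂ → LaurentSeries Fq) (i₂ : ι₂) :
    (fun i₁ => (∑ j, c j • fun i : ι₁ × ι₂ => u j.1 i.1 * v j.2 i.2) (i₁, i₂)) =
      ∑ j₁, (∑ j₂, c (j₁, j₂) • v j₂) i₂ • u j₁ := by
  funext i₁
  simp only [Finset.sum_apply, Pi.smul_apply, smul_eq_mul, ← univ_product_univ, sum_product,
    sum_mul]
  exact sum_congr rfl fun _ _ => sum_congr rfl fun _ _ => by ring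

theorem IsOrthTuple.kronecker {Fq : Type} [Field Fq] [Fintype Fq] {ι₁ ι₂ κ₁ κ₂ : Type}
    [Fintype ι₁] [Fintype ι₂] [Fintype κ₁] [Fintype κ₂]
    {u : κ₁ → ι₁ → LaurentSeries Fq} {v : κ₂ → ι₂ → LaurentSeries Fq}
    (hu : IsOrthTuple Fq u) (hv : IsOrthTuple Fq v) :
    IsOrthTuple Fq fun (j : κ₁ × κ₂) (i : ι₁ × ι₂) => u j.1 i.1 * v j.2 i.2 := by
  refine ⟨fun j h => ?_, fun c => ?_⟩
  · obtain ⟨i₁, hi₁⟩ := Function.ne_iff.mp (hu.1 j.1)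
    obtain ⟨i₂, hi₂⟩ := Function.ne_iff.mp (hv.1 j.2)
    exact mul_ne_zero hi₁ hi₂ (congrFun h (i₁, i₂))
  calc vnorm Fq (∑ j, c j • fun i : ι₁ × ι₂ => u j.1 i.1 * v j.2 i.2)
      = univ.sup fun i₂ => univ.sup fun j₁ =>
          kabs Fq ((∑ j₂, c (j₁, j₂) • v j₂) i₂) * vnorm Fq (u j₁) := by
        simp only [vnorm_prod_eq_sup, sum_smul_kronecker_slice, hu.vnorm_sum]
    _ = univ.sup fun j₁ => vnorm Fq (∑ j₂, c (j₁, j₂) • v j₂) * vnorm Fq (u j₁) := by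
        rw [Finset.sup_comm]
        simp only [vnorm, NNReal.finset_sup_mul]
    _ = univ.sup fun j => vnorm Fq (c j • fun i : ι₁ × ι₂ => u j.1 i.1 * v j.2 i.2) := by
        simp only [hv.vnorm_sum, vnorm_smul, vnorm_kronecker, NNReal.finset_sup_mul,
          ← univ_product_univ, sup_product_left, mul_assoc, mul_comm (vnorm Fq (u _))]

theorem kronecker_isHadamard_general (Fq : Type) [Field Fq] [Fintype Fq]
    (n₁ n₂ l₁ l₂ m₁ m₂ : ℕ)
    (A : Matrix (Fin n₁) (Fin n₁) (Polynomial Fq))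
    (B : Matrix (Fin n₂) (Fin n₂) (Polynomial Fq))
    (hA : IsHadamard Fq l₁ m₁ A) (hB : IsHadamard Fq l₂ m₂ B) :
    IsHadamard Fq (l₁ + l₂) (m₁ * n₂ + m₂ * n₁) (Matrix.kroneckerMap (· * ·) A B) := by
  obtain ⟨hAdeg, hAorth, hAdet⟩ := hA
  obtain ⟨hBdeg, hBorth, hBdet⟩ := hB
  refine ⟨fun i j => ?_, ?_, ?_⟩
  · calc (A i.1 j.1 * B i.2 j.2).degree ≤ (A i.1 j.1).degree + (B i.2 j.2).degree :=
          Polynomial.degree_mul_le _ _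
      _ ≤ l₁ + l₂ := add_le_add (hAdeg _ _) (hBdeg _ _)
      _ = (l₁ + l₂ : ℕ) := by norm_cast
  · simpa only [Matrix.kroneckerMap_apply, polyToK_mul] using hAorth.kronecker hBorth
  · rw [Matrix.det_kronecker, polyToK_mul, kabs_mul, polyToK_pow, polyToK_pow, kabs_pow,
      kabs_pow, hAdet, hBdet, Fintype.card_fin, Fintype.card_fin, ← pow_mul, ← pow_mul, pow_add]

/-- **Kronecker products of Hadamard matrices.** If `A` is `(l₁, q^{m₁})`-Hadamard of size
`n₁ × n₁` and `B` is `(l₂, q^{m₂})`-Hadamard of size `n₂ × n₂` over `Fq[x]`, then the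
Kronecker product `A ⊗ B` is `(l₁ + l₂, q^{m₁n₂ + m₂n₁})`-Hadamard. -/
theorem kronecker_isHadamard (Fq : Type) [Field Fq] [Fintype Fq]
    (n₁ n₂ l₁ l₂ m₁ m₂ : ℕ) (hn₁ : 1 ≤ n₁) (hn₂ : 1 ≤ n₂)
    (hm₁ : m₁ ≤ l₁ * n₁) (hm₂ : m₂ ≤ l₂ * n₂)
    (A : Matrix (Fin n₁) (Fin n₁) (Polynomial Fq))
    (B : Matrix (Fin n₂) (Fin n₂) (Polynomial Fq))
    (hA : IsHadamard Fq l₁ m₁ A) (hB : IsHadamard Fq l₂ m₂ B) :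
    IsHadamard Fq (l₁ + l₂) (m₁ * n₂ + m₂ * n₁) (Matrix.kroneckerMap (· * ·) A B) :=
  kronecker_isHadamard_general Fq n₁ n₂ l₁ l₂ m₁ m₂ A B hA hB
end

section
/- Let f: P^{n-1}(F_q) → ℤ be a function, let 2 ≤ ℓ ≤ n, and let r ∈ ℤ be such that Σ_{z ∈ I} f(z) = r for every (ℓ-2)-dimensional projective subspace I ≤ P^{n-1}(F_q). Then f is constant, equal to r(q-1)/(q^{ℓ-1}-1). -/
/-!
Write `S W` for the sum of `f` over the points of a subspace `W`. Suppose `S` takes the value `c`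
on all subspaces of dimension `d + 1` and let `U` have dimension `d`. Summing `S` over the `N`
subspaces of dimension `d + 1` containing `U` counts every point of `U` exactly `N` times and every
other point `p` exactly once (it lies only in `U ⊔ p`), so `N c = (N - 1) S U + ∑ f`.
These subspaces are the points of `ℙ(V ⧸ U)`, so `N` depends only on `d` and is at least `2` when
`d + 2 ≤ dim V`; hence `S` is also constant on subspaces of dimension `d`. Descending to `d = 1`
shows that `f` is constant, and its value follows from `|ℙ(κ^(l-1))| (q - 1) = q^(l-1) - 1`.
-/

open Module
open scoped LinearAlgebra.Projectivization

theorem finsum_mem_const {α M : Type*} [AddCommMonoid M] {s : Set α} (hs : s.Finite) (c : M) :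
    ∑ᶠ _ ∈ s, c = s.ncard • c := by
  rw [finsum_mem_eq_finite_toFinset_sum _ hs, Finset.sum_const, Set.ncard_eq_toFinset_card s hs]

namespace Submodule

variable {κ V : Type*} [Field κ] [AddCommGroup V] [Module κ V]

def covers (U : Submodule κ V) : Set (Submodule κ V) :=
  {W | U ≤ W ∧ finrank κ W = finrank κ U + 1}

theorem exists_finrank_eq [Module.Finite κ V] {d : ℕ} (hd : d ≤ finrank κ V) :
    ∃ U : Submodule κ V, finrank κ U = d := by
  obtain ⟨b, hb⟩ := exists_linearIndependent_of_le_finrank hd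
  exact ⟨span κ (Set.range b), by rw [finrank_span_eq_card hb, Fintype.card_fin]⟩

theorem finrank_map_mkQ_add_finrank [Module.Finite κ V] {U W : Submodule κ V} (h : U ≤ W) :
    finrank κ (W.map U.mkQ) + finrank κ U = finrank κ W := by
  have := LinearMap.finrank_range_add_finrank_ker (U.mkQ ∘ₗ W.subtype)
  rwa [LinearMap.range_comp, range_subtype, LinearMap.ker_comp, ker_mkQ,
    (comapSubtypeEquivOfLe h).finrank_eq] at this

theorem ncard_covers [Module.Finite κ V] (U : Submodule κ V) :
    U.covers.ncard = Nat.card (ℙ κ (V ⧸ U)) := by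
  rw [← Nat.card_coe_set_eq]
  refine Nat.card_congr (Equiv.trans ?_ (Projectivization.equivSubmodule κ (V ⧸ U)).symm)
  have hmap : ∀ L : Submodule κ (V ⧸ U), (L.comap U.mkQ).map U.mkQ = L :=
    fun L ↦ map_comap_eq_self (by simp)
  exact
    { toFun W := ⟨W.1.map U.mkQ, by
        have := finrank_map_mkQ_add_finrank W.2.1
        have := W.2.2
        omega⟩
      invFun L := ⟨L.1.comap U.mkQ, le_comap_mkQ U L.1, by
        have := finrank_map_mkQ_add_finrank (le_comap_mkQ U L.1)
        rw [hmap, L.2] at this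
        omega⟩
      left_inv W := Subtype.ext <| by simpa [comap_map_mkQ] using W.2.1
      right_inv L := Subtype.ext (hmap L) }

theorem ncard_covers_eq_geom_sum [Finite κ] [Module.Finite κ V] (U : Submodule κ V) :
    U.covers.ncard = ∑ i ∈ Finset.range (finrank κ V - finrank κ U), Nat.card κ ^ i := by
  rw [ncard_covers, Projectivization.card_of_finrank κ (V ⧸ U) (finrank_quotient U)]

end Submodule

namespace Projectivization

variable {κ V : Type*} [Field κ] [AddCommGroup V] [Module κ V]

theorem finrank_sup_submodule [Module.Finite κ V] {U : Submodule κ V} {p : ℙ κ V}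
    (hp : ¬p.submodule ≤ U) : finrank κ ↥(U ⊔ p.submodule) = finrank κ U + 1 := by
  rw [submodule_eq, Submodule.span_singleton_le_iff_mem] at *
  exact Submodule.finrank_sup_span_singleton hp

theorem eq_sup_submodule [Module.Finite κ V] {U W : Submodule κ V} {p : ℙ κ V}
    (hW : W ∈ U.covers) (hpW : p.submodule ≤ W) (hpU : ¬p.submodule ≤ U) :
    W = U ⊔ p.submodule :=
  (Submodule.eq_of_le_of_finrank_eq (sup_le hW.1 hpW)
    (by rw [hW.2, finrank_sup_submodule hpU])).symm

theorem range_map_subtype (W : Submodule κ V) :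
    Set.range (map W.subtype W.injective_subtype) = {p | p.submodule ≤ W} := by
  ext p
  constructor
  · rintro ⟨p, rfl⟩
    induction p using ind with | h w hw =>
    simp [map_mk, submodule_mk, Submodule.span_singleton_le_iff_mem]
  · intro hp
    rw [Set.mem_ofPred_eq, submodule_eq, Submodule.span_singleton_le_iff_mem] at hp
    refine ⟨mk κ ⟨p.rep, hp⟩ (by simpa using p.rep_nonzero), ?_⟩
    rw [map_mk]
    exact mk_rep p

theorem ncard_setOf_submodule_le (W : Submodule κ V) :
    {p : ℙ κ V | p.submodule ≤ W}.ncard = Nat.card (ℙ κ W) := by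
  rw [← Nat.card_coe_set_eq, ← range_map_subtype, Nat.card_range_of_injective (map_injective _ _)]

section subspaceSum

variable {M : Type*} [AddCommMonoid M]

noncomputable def subspaceSum (f : ℙ κ V → M) (W : Submodule κ V) : M :=
  ∑ᶠ p ∈ {p : ℙ κ V | p.submodule ≤ W}, f p

theorem subspaceSum_submodule (f : ℙ κ V → M) (p : ℙ κ V) :
    subspaceSum f p.submodule = f p := by
  have hpoint : {q : ℙ κ V | q.submodule ≤ p.submodule} = {p} := by
    ext q
    refine ⟨fun hq ↦ submodule_injective ?_, fun hq ↦ hq ▸ le_refl p.submodule⟩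
    exact Submodule.eq_of_le_of_finrank_eq hq (by rw [q.finrank_submodule, p.finrank_submodule])
  rw [subspaceSum, hpoint, finsum_mem_singleton]

theorem subspaceSum_of_forall_eq [Finite V] {f : ℙ κ V → M} {c : M} (hf : ∀ p, f p = c)
    (W : Submodule κ V) : subspaceSum f W = Nat.card (ℙ κ W) • c := by
  rw [subspaceSum, finsum_mem_congr rfl fun p _ ↦ hf p, finsum_mem_const (Set.toFinite _),
    ncard_setOf_submodule_le]

theorem finsum_covers_subspaceSum [Finite V] (f : ℙ κ V → M) (U : Submodule κ V) :
    ∑ᶠ W ∈ U.covers, subspaceSum f W =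
      U.covers.ncard • subspaceSum f U + ∑ᶠ p ∈ {p : ℙ κ V | ¬p.submodule ≤ U}, f p := by
  set P : Submodule κ V → Set (ℙ κ V) := fun W ↦ {p | p.submodule ≤ W}
  have hsplit : ∀ W ∈ U.covers, subspaceSum f W = subspaceSum f U + ∑ᶠ p ∈ P W \ P U, f p :=
    fun W hW ↦ (finsum_mem_add_sdiff (fun p hp ↦ le_trans hp hW.1) (Set.toFinite _)).symm
  have hcover : ⋃ W ∈ U.covers, P W \ P U = {p | ¬p.submodule ≤ U} := by
    ext p
    simp only [Set.mem_iUnion, Set.mem_sdiff, exists_prop]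
    constructor
    · rintro ⟨W, -, -, hpU⟩
      exact hpU
    · intro hpU
      exact ⟨U ⊔ p.submodule, ⟨le_sup_left, finrank_sup_submodule hpU⟩,
        show p.submodule ≤ _ from le_sup_right, hpU⟩
  have hdisj : U.covers.PairwiseDisjoint (fun W ↦ P W \ P U) := by
    intro W hW W' hW' hne
    refine Set.disjoint_left.2 fun p hp hp' ↦ hne ?_
    rw [eq_sup_submodule hW hp.1 hp.2, eq_sup_submodule hW' hp'.1 hp'.2]
  rw [finsum_mem_congr rfl hsplit, finsum_mem_add_distrib (Set.toFinite _),
    finsum_mem_const (Set.toFinite _), ← hcover,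
    finsum_mem_biUnion hdisj (Set.toFinite _) fun _ _ ↦ Set.toFinite _]

theorem subspaceSum_add_finsum_not_le [Finite V] (f : ℙ κ V → M) (U : Submodule κ V) :
    subspaceSum f U + ∑ᶠ p ∈ {p : ℙ κ V | ¬p.submodule ≤ U}, f p = ∑ᶠ p, f p := by
  have h := finsum_mem_add_sdiff (f := f) (Set.subset_univ {p : ℙ κ V | p.submodule ≤ U})
    Set.finite_univ
  rwa [finsum_mem_univ, ← Set.compl_eq_univ_sdiff] at h

end subspaceSum

theorem exists_subspaceSum_eq_of_succ [Finite κ] [Finite V] (f : ℙ κ V → ℤ) {d : ℕ}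
    (hd : d + 2 ≤ finrank κ V) {c : ℤ}
    (hc : ∀ W : Submodule κ V, finrank κ W = d + 1 → subspaceSum f W = c) :
    ∃ c' : ℤ, ∀ U : Submodule κ V, finrank κ U = d → subspaceSum f U = c' := by
  set N : ℕ := ∑ i ∈ Finset.range (finrank κ V - d), Nat.card κ ^ i
  have hN : 2 ≤ N :=
    calc 2 ≤ (Finset.range (finrank κ V - d)).card := by rw [Finset.card_range]; omega
      _ = ∑ _i ∈ Finset.range (finrank κ V - d), 1 := Finset.card_eq_sum_ones _
      _ ≤ N := Finset.sum_le_sum fun i _ ↦ Nat.one_le_pow _ _ Finite.card_pos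
  refine ⟨(N * c - ∑ᶠ p, f p) / (N - 1), fun U hU ↦ ?_⟩
  have key := finsum_covers_subspaceSum f U
  rw [finsum_mem_congr rfl fun W hW ↦ hc W (hW.2.trans (by rw [hU])),
    finsum_mem_const (Set.toFinite _), Submodule.ncard_covers_eq_geom_sum, hU, nsmul_eq_mul,
    nsmul_eq_mul] at key
  have hT := subspaceSum_add_finsum_not_le f U
  refine (Int.ediv_eq_of_eq_mul_left (by omega) ?_).symm
  linear_combination key + hT

theorem exists_subspaceSum_eq_of_le [Finite κ] [Finite V] (f : ℙ κ V → ℤ) {m : ℕ}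
    (hm : m < finrank κ V) {r : ℤ}
    (hr : ∀ W : Submodule κ V, finrank κ W = m → subspaceSum f W = r) {d : ℕ} (hd : d ≤ m) :
    ∃ c : ℤ, ∀ U : Submodule κ V, finrank κ U = d → subspaceSum f U = c := by
  refine Nat.decreasingInduction (motive := fun d _ ↦ ∃ c : ℤ, ∀ U : Submodule κ V,
    finrank κ U = d → subspaceSum f U = c) (fun d hd ⟨c, hc⟩ ↦ ?_) ⟨r, hr⟩ hd
  exact exists_subspaceSum_eq_of_succ f (by omega) hc

theorem exists_eq_const_of_subspaceSum_eq [Finite κ] [Finite V] (f : ℙ κ V → ℤ) {m : ℕ}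
    (hm1 : 1 ≤ m) (hm : m < finrank κ V) {r : ℤ}
    (hr : ∀ W : Submodule κ V, finrank κ W = m → subspaceSum f W = r) :
    ∃ c : ℤ, ∀ p, f p = c := by
  obtain ⟨c, hc⟩ := exists_subspaceSum_eq_of_le f hm hr hm1
  exact ⟨c, fun p ↦ (subspaceSum_submodule f p).symm.trans (hc _ p.finrank_submodule)⟩

end Projectivization

/-- **Functions with constant sums over projective subspaces are constant.**
Let `κ` be a finite field with `q` elements, `2 ≤ l ≤ n`, and let `f : ℙ^{n-1}(κ) → ℤ` be
such that the sum of `f` over every `(l-2)`-dimensional projective subspace of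
`ℙ^{n-1}(κ)` (i.e. over the set of points lying in a fixed linear subspace `W ≤ κ^n` of
linear dimension `l - 1`) equals `r`. Then `f` is constant, equal to
`r(q-1)/(q^(l-1)-1)`. -/
theorem constant_of_sum_over_subspaces (κ : Type) [Field κ] [Fintype κ] (q : ℕ)
    (hq : Fintype.card κ = q) (n l : ℕ) (hl : 2 ≤ l) (hln : l ≤ n)
    (f : Projectivization κ (Fin n → κ) → ℤ) (r : ℤ)
    (hsum : ∀ W : Submodule κ (Fin n → κ), Module.finrank κ W = l - 1 →
      ∑ᶠ p ∈ {p : Projectivization κ (Fin n → κ) | Projectivization.submodule p ≤ W}, f p = r) :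
    ∀ p : Projectivization κ (Fin n → κ),
      (f p : ℚ) = (r * ((q : ℚ) - 1)) / ((q : ℚ) ^ (l - 1) - 1) := by
  have hn : finrank κ (Fin n → κ) = n := finrank_fin_fun κ
  obtain ⟨c, hc⟩ := Projectivization.exists_eq_const_of_subspaceSum_eq f (by omega) (by omega) hsum
  obtain ⟨W, hW⟩ := Submodule.exists_finrank_eq (κ := κ) (V := Fin n → κ) (d := l - 1) (by omega)
  have hr : r = ((∑ i ∈ Finset.range (l - 1), q ^ i : ℕ) : ℤ) * c := by
    rw [← hsum W hW, ← Projectivization.subspaceSum,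
      Projectivization.subspaceSum_of_forall_eq hc, Projectivization.card_of_finrank κ W hW,
      Nat.card_eq_fintype_card, hq, nsmul_eq_mul]
  have hq1 : (1 : ℚ) < q := by
    rw [← hq]
    exact_mod_cast Fintype.one_lt_card
  have hden : (q : ℚ) ^ (l - 1) - 1 ≠ 0 := (sub_pos.2 (one_lt_pow₀ hq1 (by omega))).ne'
  intro p
  rw [hc p, hr, eq_div_iff hden, ← geom_sum_mul]
  push_cast
  ring
end
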